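/- (Convergence of AGS-GD for non-convex L-smooth functions.) Let f:ℝ^d→ℝ be L-smooth with finite minimum f*. Let (Σ_t)_{t≥1} be symmetric invertible matrices, let 0 < λ ≤ 1/L, and define the iterates x_t = x_{t−1} − λ·∇f_{Σ_t}(x_{t−1}) for t = 1,...,T starting from x₀∈ℝ^d. Let B(Σ,T') be any function satisfying |f_Σ(x) − f_{T'}(x)| ≤ B(Σ,T') for all x. Then min_{t=1,...,T} ‖∇f(x_t)‖² ≤ (4/(Tλ))·(f(x₀) − f*) + (L²/T)·((6+d)/2)³·Σ_{t=1}^{T}‖Σ_t‖⁴‖Σ_t^{-1}‖² + (4/(Tλ))·Σ_{t=0}^{T} B(Σ_{t+1}, Σ_t). -/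

import Mathlib

open MeasureTheory Filter Matrix

noncomputable section

abbrev Vec (d : ℕ) := EuclideanSpace ℝ (Fin d)

/-- Action of a `d × d` matrix on a vector in `ℝ^d`. -/
def mApp {d : ℕ} (S : Matrix (Fin d) (Fin d) ℝ) (u : Vec d) : Vec d :=
  Matrix.toEuclideanLin S u

/-- Anisotropic Gaussian smoothing of `f` by the matrix `S`:
`f_S(x) = π^{-d/2} ∫ f(x + S u) e^{-‖u‖²} du`. -/
def gsmooth {d : ℕ} (f : Vec d → ℝ) (S : Matrix (Fin d) (Fin d) ℝ) (x : Vec d) : ℝ :=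
  (Real.pi ^ ((d : ℝ) / 2))⁻¹ * ∫ u : Vec d, f (x + mApp S u) * Real.exp (-‖u‖ ^ 2)

/-- Operator (spectral) norm of a matrix, acting on Euclidean space. -/
def opNorm {d : ℕ} (S : Matrix (Fin d) (Fin d) ℝ) : ℝ :=
  ‖LinearMap.toContinuousLinearMap (Matrix.toEuclideanLin S)‖

/-!
Since `∇f_Σ(x) - ∇f(x)` is the Gaussian average of `∇f(x + Σu) - ∇f(x)`, the smoothed gradient
is an `L ‖Σ‖ √(d/2)`-accurate estimate of `∇f`, the constant coming from
`∫ ‖u‖ e^{-‖u‖²} du ≤ √(d/2) π^{d/2}`. So AGS-GD is gradient descent with a bounded gradient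
error `G_t`, and the descent lemma for `λ ≤ 1/L` gives
`f(x_{t+1}) ≤ f(x_t) - (3λ/7) ‖g_t‖² + (7λ/2) G_t²` for the step direction `g_t`. Telescoping down
to `f* ≤ f(x_T)` bounds `∑ ‖g_t‖²`, and `‖∇f(x_t)‖ ≤ ‖g_t‖ + G_t` turns this into a bound on the
average, hence on the minimum, of `‖∇f(x_t)‖²`; for `T ≤ 2` the estimate
`λ ‖∇f(y)‖² ≤ 2 (f(y) - f*)` at `y = x_1` is used instead. Finally
`26 G_t² ≤ L² ((6+d)/2)³ ‖Σ_t‖⁴ ‖Σ_t⁻¹‖²` because `‖Σ‖ ≤ ‖Σ‖² ‖Σ⁻¹‖`, and the terms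
`B(Σ_{t+1}, Σ_t)` are nonnegative.
-/

open scoped NNReal RealInnerProductSpace

section GaussianMoments

variable {V : Type*} [NormedAddCommGroup V] [InnerProductSpace ℝ V] [FiniteDimensional ℝ V]
  [MeasurableSpace V] [BorelSpace V]

open Real

theorem integrable_exp_neg_mul_sq_norm {b : ℝ} (hb : 0 < b) :
    Integrable (fun v : V => exp (-b * ‖v‖ ^ 2)) := by
  refine (GaussianFourier.integrable_cexp_neg_mul_sq_norm_add (V := V) (b := b)
    (by simpa using hb) 0 0).norm.congr (.of_forall fun v => ?_)
  simp [Complex.norm_exp, ← Complex.ofReal_pow]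

theorem sq_mul_exp_neg_mul_sq_le {b : ℝ} (hb : 0 < b) (r : ℝ) :
    r ^ 2 * exp (-b * r ^ 2) ≤ 2 / b * exp (-(b / 2) * r ^ 2) := by
  have hsplit : exp (-b * r ^ 2) = exp (-(b / 2) * r ^ 2) * exp (-(b / 2) * r ^ 2) := by
    rw [← exp_add]; ring_nf
  have hx : r ^ 2 * exp (-(b / 2) * r ^ 2) ≤ 2 / b := by
    rw [neg_mul, exp_neg, ← div_eq_mul_inv, div_le_div_iff₀ (exp_pos _) hb]
    linarith [add_one_le_exp (b / 2 * r ^ 2)]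
  rw [hsplit, ← mul_assoc]
  exact mul_le_mul_of_nonneg_right hx (exp_nonneg _)

theorem integrable_sq_norm_mul_exp_neg_mul_sq_norm {b : ℝ} (hb : 0 < b) :
    Integrable (fun v : V => ‖v‖ ^ 2 * exp (-b * ‖v‖ ^ 2)) := by
  refine ((integrable_exp_neg_mul_sq_norm (half_pos hb)).const_mul (2 / b)).mono'
    (by fun_prop) (.of_forall fun v => ?_)
  rw [Real.norm_of_nonneg (by positivity)]
  exact sq_mul_exp_neg_mul_sq_le hb ‖v‖

theorem integrable_exp_neg_sq_norm : Integrable (fun v : V => exp (-‖v‖ ^ 2)) := by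
  simpa using integrable_exp_neg_mul_sq_norm (V := V) one_pos

theorem integrable_sq_norm_mul_exp_neg_sq_norm :
    Integrable (fun v : V => ‖v‖ ^ 2 * exp (-‖v‖ ^ 2)) := by
  simpa using integrable_sq_norm_mul_exp_neg_mul_sq_norm (V := V) one_pos

theorem integrable_norm_mul_exp_neg_sq_norm :
    Integrable (fun v : V => ‖v‖ * exp (-‖v‖ ^ 2)) := by
  refine (integrable_exp_neg_sq_norm.add integrable_sq_norm_mul_exp_neg_sq_norm).mono'
    (by fun_prop) (.of_forall fun v => ?_)
  rw [Real.norm_of_nonneg (by positivity), Pi.add_apply]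
  nlinarith [exp_pos (-‖v‖ ^ 2), sq_nonneg (‖v‖ - 1)]

theorem integrable_quadratic_mul_exp_neg_sq_norm (a b c : ℝ) :
    Integrable (fun v : V => (a + b * ‖v‖ + c * ‖v‖ ^ 2) * exp (-‖v‖ ^ 2)) := by
  refine (((integrable_exp_neg_sq_norm.const_mul a).add
    (integrable_norm_mul_exp_neg_sq_norm.const_mul b)).add
    (integrable_sq_norm_mul_exp_neg_sq_norm.const_mul c)).congr (.of_forall fun v => ?_)
  simp only [Pi.add_apply]
  ring

theorem integral_exp_neg_sq_norm :
    ∫ v : V, exp (-‖v‖ ^ 2) = π ^ ((Module.finrank ℝ V : ℝ) / 2) := by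
  simpa using GaussianFourier.integral_rexp_neg_mul_sq_norm (V := V) one_pos

/-- Differentiating `b ↦ ∫ exp (-b ‖v‖²) = (π / b) ^ (n / 2)` at `b = 1`. -/
theorem integral_sq_norm_mul_exp_neg_sq_norm :
    ∫ v : V, ‖v‖ ^ 2 * exp (-‖v‖ ^ 2) =
      (Module.finrank ℝ V : ℝ) / 2 * π ^ ((Module.finrank ℝ V : ℝ) / 2) := by
  set r : ℝ := (Module.finrank ℝ V : ℝ) / 2
  have hderiv := (hasDerivAt_integral_of_dominated_loc_of_deriv_le
      (F := fun (b : ℝ) (v : V) => exp (-b * ‖v‖ ^ 2))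
      (F' := fun (b : ℝ) (v : V) => -(‖v‖ ^ 2 * exp (-b * ‖v‖ ^ 2)))
      (bound := fun v : V => ‖v‖ ^ 2 * exp (-(1 / 2) * ‖v‖ ^ 2))
      (Metric.ball_mem_nhds (1 : ℝ) (by norm_num : (0 : ℝ) < 1 / 2))
      (.of_forall fun b => by fun_prop) (integrable_exp_neg_mul_sq_norm one_pos)
      (by fun_prop) ?_ (integrable_sq_norm_mul_exp_neg_mul_sq_norm (by norm_num)) ?_).2
  rotate_left
  · refine .of_forall fun v b hb => ?_
    have hb' : 1 / 2 ≤ b := by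
      rw [Metric.mem_ball, Real.dist_eq, abs_lt] at hb; linarith
    rw [norm_neg, Real.norm_of_nonneg (by positivity)]
    gcongr
  · refine .of_forall fun v b _ => ?_
    exact ((((hasDerivAt_id b).neg.mul_const (‖v‖ ^ 2)).exp).congr_deriv (by simp; ring))
  have hclosed : HasDerivAt (fun b : ℝ => (π / b) ^ r) (-(r * π ^ r)) 1 := by
    have h := ((Real.hasDerivAt_rpow_const (x := π / 1) (p := r) (Or.inl (by positivity))).comp 1
      ((hasDerivAt_inv one_ne_zero).const_mul π))
    refine (h.congr_of_eventuallyEq (.of_forall fun b => by simp [div_eq_mul_inv])).congr_deriv ?_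
    rw [div_one, Real.rpow_sub_one pi_ne_zero]
    field_simp
  have heq : (fun b : ℝ => ∫ v : V, exp (-b * ‖v‖ ^ 2)) =ᶠ[nhds 1] fun b => (π / b) ^ r :=
    (eventually_gt_nhds one_pos).mono fun b hb =>
      GaussianFourier.integral_rexp_neg_mul_sq_norm hb
  have h := hderiv.unique ((heq.hasDerivAt_iff).2 hclosed)
  rw [integral_neg] at h
  simpa using neg_inj.1 h

theorem integral_norm_mul_exp_neg_sq_norm_le :
    ∫ v : V, ‖v‖ * exp (-‖v‖ ^ 2) ≤
      √((Module.finrank ℝ V : ℝ) / 2) * π ^ ((Module.finrank ℝ V : ℝ) / 2) := by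
  set n := Module.finrank ℝ V
  rcases Nat.eq_zero_or_pos n with hn | hn
  · have : Subsingleton V := Module.finrank_zero_iff.1 hn
    simp [hn, norm_of_subsingleton]
  set a := √((n : ℝ) / 2)
  have ha : 0 < a := Real.sqrt_pos.2 (by positivity)
  have ha2 : a ^ 2 = n / 2 := Real.sq_sqrt (by positivity)
  -- AM-GM `‖v‖ ≤ a / 2 + ‖v‖² / (2a)`; integrated, it is smallest for `a² = n / 2`
  have hpt : ∀ v : V, ‖v‖ * exp (-‖v‖ ^ 2) ≤
      a / 2 * exp (-‖v‖ ^ 2) + 1 / (2 * a) * (‖v‖ ^ 2 * exp (-‖v‖ ^ 2)) := by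
    intro v
    have h : ‖v‖ ≤ a / 2 + 1 / (2 * a) * ‖v‖ ^ 2 := by
      rw [← sub_nonneg]
      have : a / 2 + 1 / (2 * a) * ‖v‖ ^ 2 - ‖v‖ = (a - ‖v‖) ^ 2 / (2 * a) := by
        field_simp; ring
      rw [this]; positivity
    nlinarith [exp_pos (-‖v‖ ^ 2)]
  have h0 := integrable_exp_neg_sq_norm (V := V)
  have h2 := integrable_sq_norm_mul_exp_neg_sq_norm (V := V)
  calc ∫ v : V, ‖v‖ * exp (-‖v‖ ^ 2)
      ≤ ∫ v : V, (a / 2 * exp (-‖v‖ ^ 2) + 1 / (2 * a) * (‖v‖ ^ 2 * exp (-‖v‖ ^ 2))) :=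
        integral_mono integrable_norm_mul_exp_neg_sq_norm
          ((h0.const_mul _).add (h2.const_mul _)) hpt
    _ = a * π ^ ((n : ℝ) / 2) := by
        rw [integral_add (h0.const_mul _) (h2.const_mul _), integral_const_mul,
          integral_const_mul, integral_exp_neg_sq_norm, integral_sq_norm_mul_exp_neg_sq_norm,
          ← ha2]
        field_simp
        ring

end GaussianMoments

section LipschitzGradient

variable {F : Type*} [NormedAddCommGroup F] [InnerProductSpace ℝ F] [CompleteSpace F]
  {f : F → ℝ} {K : ℝ≥0}

theorem abs_sub_sub_inner_gradient_le (hf : Differentiable ℝ f)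
    (hK : LipschitzWith K (gradient f)) (x v : F) :
    |f (x + v) - f x - ⟪gradient f x, v⟫| ≤ K / 2 * ‖v‖ ^ 2 := by
  let φ : ℝ → ℝ := fun t => f (x + t • v) - f x - t * ⟪gradient f x, v⟫
  have hφ : ∀ t, HasDerivAt φ ⟪gradient f (x + t • v) - gradient f x, v⟫ t := by
    intro t
    have hline : HasDerivAt (fun t : ℝ => x + t • v) v t := by
      simpa using ((hasDerivAt_id t).smul_const v).const_add x
    have h := (hf _).hasGradientAt.hasFDerivAt.comp_hasDerivAt t hline
    rw [InnerProductSpace.toDual_apply_apply] at h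
    exact ((h.sub_const (f x)).sub ((hasDerivAt_id t).mul_const _)).congr_deriv
      (by rw [inner_sub_left, one_mul])
  have hB : ∀ t, HasDerivAt (fun t : ℝ => K / 2 * ‖v‖ ^ 2 * t ^ 2) (K * ‖v‖ ^ 2 * t) t := by
    intro t
    exact ((hasDerivAt_pow 2 t).const_mul _).congr_deriv (by norm_num; ring)
  have hbound : ∀ t ∈ Set.Ico (0 : ℝ) 1,
      ‖⟪gradient f (x + t • v) - gradient f x, v⟫‖ ≤ K * ‖v‖ ^ 2 * t := by
    intro t ht
    calc ‖⟪gradient f (x + t • v) - gradient f x, v⟫‖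
        ≤ ‖gradient f (x + t • v) - gradient f x‖ * ‖v‖ := norm_inner_le_norm _ _
      _ ≤ K * ‖t • v‖ * ‖v‖ := by
          gcongr
          simpa using hK.norm_sub_le (x + t • v) x
      _ = K * ‖v‖ ^ 2 * t := by
          rw [norm_smul, Real.norm_of_nonneg ht.1]; ring
  have h := image_norm_le_of_norm_deriv_right_le_deriv_boundary (f := φ)
    (fun t _ => (hφ t).continuousAt.continuousWithinAt) (fun t _ => (hφ t).hasDerivWithinAt)
    (by simp [φ]) hB hbound (Set.right_mem_Icc.2 zero_le_one)
  simpa [φ, mul_comm] using h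

theorem le_add_inner_gradient_add (hf : Differentiable ℝ f)
    (hK : LipschitzWith K (gradient f)) (x v : F) :
    f (x + v) ≤ f x + ⟪gradient f x, v⟫ + K / 2 * ‖v‖ ^ 2 := by
  linarith [(abs_le.1 (abs_sub_sub_inner_gradient_le hf hK x v)).2]

theorem abs_le_of_lipschitzWith_gradient (hf : Differentiable ℝ f)
    (hK : LipschitzWith K (gradient f)) (x v : F) :
    |f (x + v)| ≤ |f x| + ‖gradient f x‖ * ‖v‖ + K / 2 * ‖v‖ ^ 2 := by
  have h := abs_le.1 (abs_sub_sub_inner_gradient_le hf hK x v)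
  have hinner := abs_le.1 (abs_real_inner_le_norm (gradient f x) v)
  rw [abs_le]
  constructor <;> linarith [neg_abs_le (f x), le_abs_self (f x)]

theorem norm_gradient_add_le (hK : LipschitzWith K (gradient f)) (x v : F) :
    ‖gradient f (x + v)‖ ≤ ‖gradient f x‖ + K * ‖v‖ := by
  have h := hK.norm_sub_le (x + v) x
  rw [add_sub_cancel_left] at h
  linarith [norm_sub_norm_le (gradient f (x + v)) (gradient f x)]

theorem sub_biased_gradient_step_le (hf : Differentiable ℝ f)
    (hK : LipschitzWith K (gradient f)) {y g : F} {lam G : ℝ} (hlam : 0 < lam)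
    (hlamK : lam * K ≤ 1) (hg : ‖g - gradient f y‖ ≤ G) :
    f (y - lam • g) ≤ f y - 3 * lam / 7 * ‖g‖ ^ 2 + 7 * lam / 2 * G ^ 2 := by
  have hdesc := le_add_inner_gradient_add hf hK y (-(lam • g))
  rw [← sub_eq_add_neg, inner_neg_right, real_inner_smul_right, norm_neg, norm_smul,
    Real.norm_of_nonneg hlam.le] at hdesc
  have hinner : ‖g‖ ^ 2 - G * ‖g‖ ≤ ⟪gradient f y, g⟫ := by
    have h := real_inner_le_norm (g - gradient f y) g
    rw [inner_sub_left, real_inner_self_eq_norm_sq, real_inner_comm] at h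
    nlinarith [mul_le_mul_of_nonneg_right hg (norm_nonneg g), real_inner_comm g (gradient f y)]
  have hcurv : K / 2 * (lam * ‖g‖) ^ 2 ≤ lam / 2 * ‖g‖ ^ 2 := by
    have : 0 ≤ (1 - lam * K) * (lam * ‖g‖ ^ 2) := by positivity
    nlinarith
  -- Young: `G ‖g‖ ≤ ‖g‖² / 14 + 7 G² / 2`
  nlinarith [sq_nonneg (7 * G - ‖g‖)]

theorem mul_sq_norm_gradient_le (hf : Differentiable ℝ f)
    (hK : LipschitzWith K (gradient f)) {m lam : ℝ} (hm : ∀ y, m ≤ f y) (hlam : 0 < lam)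
    (hlamK : lam * K ≤ 1) (x : F) :
    lam * ‖gradient f x‖ ^ 2 ≤ 2 * (f x - m) := by
  have hdesc := le_add_inner_gradient_add hf hK x (-(lam • gradient f x))
  rw [inner_neg_right, real_inner_smul_right, real_inner_self_eq_norm_sq, norm_neg, norm_smul,
    Real.norm_of_nonneg hlam.le] at hdesc
  have hcurv : K / 2 * (lam * ‖gradient f x‖) ^ 2 ≤ lam / 2 * ‖gradient f x‖ ^ 2 := by
    have : 0 ≤ (1 - lam * K) * (lam * ‖gradient f x‖ ^ 2) := by positivity
    nlinarith
  linarith [hm (x + -(lam • gradient f x))]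

section BiasedGradientDescent

theorem sq_norm_le_of_norm_sub_le {E : Type*} [SeminormedAddCommGroup E] {a b : E} {G : ℝ}
    (h : ‖b - a‖ ≤ G) : ‖a‖ ^ 2 ≤ 8 / 7 * ‖b‖ ^ 2 + 8 * G ^ 2 := by
  have htri : ‖a‖ ≤ ‖b‖ + G := by linarith [norm_sub_norm_le a b, norm_sub_rev b a]
  nlinarith [norm_nonneg a, sq_nonneg (‖b‖ - 7 * G), (norm_nonneg _).trans h]

theorem sum_Ico_sq_norm_le {E : Type*} [SeminormedAddCommGroup E] {a b : ℕ → E} {G : ℕ → ℝ}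
    {T : ℕ} (h : ∀ t < T, ‖b t - a t‖ ≤ G t) :
    ∑ t ∈ Finset.Ico 1 T, ‖a t‖ ^ 2 ≤
      8 / 7 * ∑ t ∈ Finset.range T, ‖b t‖ ^ 2 + 8 * ∑ t ∈ Finset.range T, G t ^ 2 := by
  calc ∑ t ∈ Finset.Ico 1 T, ‖a t‖ ^ 2
      ≤ ∑ t ∈ Finset.Ico 1 T, (8 / 7 * ‖b t‖ ^ 2 + 8 * G t ^ 2) :=
        Finset.sum_le_sum fun t ht => sq_norm_le_of_norm_sub_le (h t (Finset.mem_Ico.1 ht).2)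
    _ ≤ ∑ t ∈ Finset.range T, (8 / 7 * ‖b t‖ ^ 2 + 8 * G t ^ 2) :=
        Finset.sum_le_sum_of_subset_of_nonneg
          (fun t ht => Finset.mem_range.2 (Finset.mem_Ico.1 ht).2) fun t _ _ => by positivity
    _ = 8 / 7 * ∑ t ∈ Finset.range T, ‖b t‖ ^ 2 + 8 * ∑ t ∈ Finset.range T, G t ^ 2 := by
        rw [Finset.sum_add_distrib, ← Finset.mul_sum, ← Finset.mul_sum]

variable {x g : ℕ → F} {G : ℕ → ℝ} {lam m : ℝ} {T : ℕ}

theorem add_sum_sq_norm_le_of_biased_gd (hf : Differentiable ℝ f)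
    (hK : LipschitzWith K (gradient f)) (hlam : 0 < lam) (hlamK : lam * K ≤ 1)
    (hx : ∀ t < T, x (t + 1) = x t - lam • g t)
    (hg : ∀ t < T, ‖g t - gradient f (x t)‖ ≤ G t) {n : ℕ} (hn : n ≤ T) :
    f (x n) + 3 * lam / 7 * ∑ t ∈ Finset.range n, ‖g t‖ ^ 2 ≤
      f (x 0) + 7 * lam / 2 * ∑ t ∈ Finset.range n, G t ^ 2 := by
  induction n with
  | zero => simp
  | succ n ih =>
    have hstep := sub_biased_gradient_step_le hf hK hlam hlamK (hg n hn)
    rw [← hx n hn] at hstep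
    rw [Finset.sum_range_succ, Finset.sum_range_succ]
    linarith [ih (Nat.le_of_succ_le hn)]

theorem inf'_sq_norm_gradient_le_of_biased_gd (hf : Differentiable ℝ f)
    (hK : LipschitzWith K (gradient f)) (hm : ∀ y, m ≤ f y) (hlam : 0 < lam)
    (hlamK : lam * K ≤ 1) (hT : 1 ≤ T)
    (hx : ∀ t < T, x (t + 1) = x t - lam • g t)
    (hg : ∀ t < T, ‖g t - gradient f (x t)‖ ≤ G t) :
    (Finset.Icc 1 T).inf' (Finset.nonempty_Icc.mpr hT) (fun t => ‖gradient f (x t)‖ ^ 2) ≤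
      4 / (T * lam) * (f (x 0) - m) + 26 / T * ∑ t ∈ Finset.range T, G t ^ 2 := by
  set μ := (Finset.Icc 1 T).inf' (Finset.nonempty_Icc.mpr hT) (fun t => ‖gradient f (x t)‖ ^ 2)
  set P := ∑ t ∈ Finset.range T, ‖g t‖ ^ 2
  set Q := ∑ t ∈ Finset.range T, G t ^ 2
  have hμ : ∀ t ∈ Finset.Icc 1 T, μ ≤ ‖gradient f (x t)‖ ^ 2 := fun t ht => Finset.inf'_le _ ht
  have hdescent : 3 * lam / 7 * P ≤ f (x 0) - m + 7 * lam / 2 * Q := by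
    linarith [add_sum_sq_norm_le_of_biased_gd hf hK hlam hlamK hx hg le_rfl, hm (x T)]
  have hμ0 : 0 ≤ μ := Finset.le_inf' _ _ fun t _ => sq_nonneg _
  suffices h : T * lam * μ ≤ 4 * (f (x 0) - m) + 26 * lam * Q by
    have hsplit : 4 / (T * lam) * (f (x 0) - m) + 26 / T * Q =
        (4 * (f (x 0) - m) + 26 * lam * Q) / (T * lam) := by
      field_simp
    rw [hsplit, le_div_iff₀ (by positivity)]
    linarith
  rcases le_or_gt T 2 with hT2 | hT3
  -- for `T ≤ 2` the first iterate alone suffices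
  · have hfirst : f (x 1) ≤ f (x 0) + 7 * lam / 2 * G 0 ^ 2 := by
      have h := add_sum_sq_norm_le_of_biased_gd hf hK hlam hlamK hx hg hT
      simp only [Finset.sum_range_one] at h
      nlinarith [sq_nonneg ‖g 0‖]
    have hG0 : G 0 ^ 2 ≤ Q :=
      Finset.single_le_sum (f := fun t => G t ^ 2) (fun t _ => sq_nonneg _)
        (Finset.mem_range.2 hT)
    have hμ1 : lam * μ ≤ 2 * (f (x 1) - m) :=
      (mul_le_mul_of_nonneg_left (hμ 1 (Finset.mem_Icc.2 ⟨le_rfl, hT⟩)) hlam.le).trans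
        (mul_sq_norm_gradient_le hf hK hm hlam hlamK (x 1))
    have hT2' : (T : ℝ) ≤ 2 := by exact_mod_cast hT2
    nlinarith [mul_nonneg (sub_nonneg.2 hT2') (mul_nonneg hlam.le hμ0)]
  -- for `T ≥ 3`, average over the `T - 1` iterates `x t`, `1 ≤ t < T`, that have a step `g t`
  · have hcount : ((T : ℝ) - 1) * μ ≤ 8 / 7 * P + 8 * Q := by
      have hcard := Finset.card_nsmul_le_sum (Finset.Ico 1 T) _ μ fun t ht =>
        hμ t (Finset.Ico_subset_Icc_self ht)
      rw [Nat.card_Ico, nsmul_eq_mul, Nat.cast_sub hT, Nat.cast_one] at hcard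
      exact hcard.trans (sum_Ico_sq_norm_le hg)
    have hT3' : (3 : ℝ) ≤ T := by exact_mod_cast hT3
    nlinarith [mul_le_mul_of_nonneg_left hcount hlam.le,
      mul_nonneg (sub_nonneg.2 hT3') (mul_nonneg hlam.le hμ0)]

end BiasedGradientDescent

end LipschitzGradient

section Smoothing

open scoped Matrix.Norms.L2Operator
open Real

variable {d : ℕ} {f : Vec d → ℝ} {K : ℝ≥0}

theorem opNorm_eq_norm (S : Matrix (Fin d) (Fin d) ℝ) : opNorm S = ‖S‖ := rfl

theorem opNorm_nonneg (S : Matrix (Fin d) (Fin d) ℝ) : 0 ≤ opNorm S := norm_nonneg _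

theorem norm_mApp_le (S : Matrix (Fin d) (Fin d) ℝ) (u : Vec d) :
    ‖mApp S u‖ ≤ opNorm S * ‖u‖ :=
  (toEuclideanCLM (𝕜 := ℝ) S).le_opNorm u

theorem opNorm_le_sq_mul_opNorm_inv {S : Matrix (Fin d) (Fin d) ℝ} (hS : IsUnit S.det) :
    opNorm S ≤ opNorm S ^ 2 * opNorm S⁻¹ := by
  rw [opNorm_eq_norm, opNorm_eq_norm]
  calc ‖S‖ = ‖S * S⁻¹ * S‖ := by rw [mul_nonsing_inv S hS, one_mul]
    _ ≤ ‖S‖ * ‖S⁻¹‖ * ‖S‖ := (l2_opNorm_mul _ _).trans (by gcongr; exact l2_opNorm_mul _ _)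
    _ = ‖S‖ ^ 2 * ‖S⁻¹‖ := by ring

theorem sq_mul_sqrt_le_opNorm_pow_four_mul {S : Matrix (Fin d) (Fin d) ℝ} (hS : IsUnit S.det)
    (L : ℝ) :
    26 * (L * opNorm S * √((d : ℝ) / 2)) ^ 2 ≤
      L ^ 2 * (((6 : ℝ) + d) / 2) ^ 3 * (opNorm S ^ 4 * opNorm S⁻¹ ^ 2) := by
  have hM := opNorm_nonneg S
  have hMN : opNorm S ^ 2 ≤ opNorm S ^ 4 * opNorm S⁻¹ ^ 2 := by
    have h := pow_le_pow_left₀ hM (opNorm_le_sq_mul_opNorm_inv hS) 2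
    linarith [show (opNorm S ^ 2 * opNorm S⁻¹) ^ 2 = opNorm S ^ 4 * opNorm S⁻¹ ^ 2 by ring]
  have hd : (0 : ℝ) ≤ d := d.cast_nonneg
  have hcube : 13 * (d : ℝ) ≤ ((6 + d) / 2) ^ 3 := by nlinarith [sq_nonneg (d : ℝ)]
  rw [mul_pow, mul_pow, Real.sq_sqrt (by positivity)]
  calc 26 * (L ^ 2 * opNorm S ^ 2 * (d / 2)) = L ^ 2 * (13 * d) * opNorm S ^ 2 := by ring
    _ ≤ L ^ 2 * ((6 + d) / 2) ^ 3 * (opNorm S ^ 4 * opNorm S⁻¹ ^ 2) := by gcongr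

theorem sum_sq_mul_sqrt_le_sum_opNorm_pow_four_mul {S : ℕ → Matrix (Fin d) (Fin d) ℝ}
    (hS : ∀ t, 1 ≤ t → IsUnit (S t).det) (L : ℝ) (T : ℕ) :
    26 / (T : ℝ) * ∑ t ∈ Finset.range T, (L * opNorm (S (t + 1)) * √((d : ℝ) / 2)) ^ 2 ≤
      L ^ 2 / (T : ℝ) * (((6 : ℝ) + d) / 2) ^ 3 *
        ∑ t ∈ Finset.Icc 1 T, opNorm (S t) ^ 4 * opNorm (S t)⁻¹ ^ 2 := by
  have hreindex : ∑ t ∈ Finset.range T, (L * opNorm (S (t + 1)) * √((d : ℝ) / 2)) ^ 2 =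
      ∑ t ∈ Finset.Icc 1 T, (L * opNorm (S t) * √((d : ℝ) / 2)) ^ 2 := by
    rw [Finset.range_eq_Ico,
      Finset.sum_Ico_add' (fun t => (L * opNorm (S t) * √((d : ℝ) / 2)) ^ 2), zero_add,
      Finset.Ico_add_one_right_eq_Icc]
  have hterms := Finset.sum_le_sum fun t (ht : t ∈ Finset.Icc 1 T) =>
    sq_mul_sqrt_le_opNorm_pow_four_mul (hS t (Finset.mem_Icc.1 ht).1) L
  rw [← Finset.mul_sum, ← Finset.mul_sum] at hterms
  rw [hreindex, div_mul_eq_mul_div, div_mul_eq_mul_div, div_mul_eq_mul_div]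
  gcongr

theorem continuous_mApp (S : Matrix (Fin d) (Fin d) ℝ) : Continuous (mApp S) :=
  (toEuclideanCLM (𝕜 := ℝ) S).continuous

theorem integrable_comp_add_mApp_mul_exp (hf : Differentiable ℝ f)
    (hK : LipschitzWith K (gradient f)) (S : Matrix (Fin d) (Fin d) ℝ) (x : Vec d) :
    Integrable fun u : Vec d => f (x + mApp S u) * exp (-‖u‖ ^ 2) := by
  have := continuous_mApp S
  have := hf.continuous
  refine (integrable_quadratic_mul_exp_neg_sq_norm (|f x|) (‖gradient f x‖ * opNorm S)
    (K / 2 * opNorm S ^ 2)).mono' (by fun_prop) (.of_forall fun u => ?_)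
  have hu := norm_mApp_le S u
  rw [norm_mul, Real.norm_eq_abs, Real.norm_of_nonneg (exp_nonneg _), mul_assoc, mul_assoc,
    ← mul_pow]
  gcongr
  exact (abs_le_of_lipschitzWith_gradient hf hK x (mApp S u)).trans (by gcongr)

theorem integrable_exp_smul_gradient_comp (hK : LipschitzWith K (gradient f))
    (S : Matrix (Fin d) (Fin d) ℝ) (x : Vec d) :
    Integrable (fun u : Vec d => exp (-‖u‖ ^ 2) • gradient f (x + mApp S u)) := by
  have := continuous_mApp S
  have := hK.continuous
  refine (integrable_quadratic_mul_exp_neg_sq_norm (‖gradient f x‖) (K * opNorm S) 0).mono'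
    (by fun_prop) (.of_forall fun u => ?_)
  rw [norm_smul, Real.norm_of_nonneg (exp_nonneg _), mul_comm, mul_assoc, zero_mul, add_zero]
  gcongr
  exact (norm_gradient_add_le hK x _).trans (by gcongr; exact norm_mApp_le S u)

theorem hasGradientAt_gsmooth (hf : Differentiable ℝ f) (hK : LipschitzWith K (gradient f))
    (S : Matrix (Fin d) (Fin d) ℝ) (x₀ : Vec d) :
    HasGradientAt (gsmooth f S)
      ((π ^ ((d : ℝ) / 2))⁻¹ • ∫ u : Vec d, exp (-‖u‖ ^ 2) • gradient f (x₀ + mApp S u)) x₀ := by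
  have := continuous_mApp S
  have := hf.continuous
  have := hK.continuous
  have hderiv := hasFDerivAt_integral_of_dominated_of_fderiv_le
    (F := fun (x u : Vec d) => f (x + mApp S u) * exp (-‖u‖ ^ 2))
    (F' := fun (x u : Vec d) =>
      InnerProductSpace.toDual ℝ (Vec d) (exp (-‖u‖ ^ 2) • gradient f (x + mApp S u)))
    (bound := fun u => ((‖gradient f x₀‖ + K) + K * opNorm S * ‖u‖ + 0 * ‖u‖ ^ 2) *
      exp (-‖u‖ ^ 2))
    (Metric.ball_mem_nhds x₀ one_pos) (.of_forall fun x => by fun_prop)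
    (integrable_comp_add_mApp_mul_exp hf hK S x₀) (by fun_prop) ?_
    (integrable_quadratic_mul_exp_neg_sq_norm _ _ _) ?_
  rotate_left
  · refine .of_forall fun u x hx => ?_
    rw [LinearIsometryEquiv.norm_map, norm_smul, Real.norm_of_nonneg (exp_nonneg _), mul_comm,
      zero_mul, add_zero]
    gcongr
    have hdist : ‖x - x₀ + mApp S u‖ ≤ 1 + opNorm S * ‖u‖ :=
      (norm_add_le _ _).trans (add_le_add (mem_ball_iff_norm.1 hx).le (norm_mApp_le S u))
    have h := norm_gradient_add_le hK x₀ (x - x₀ + mApp S u)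
    rw [← add_assoc, add_sub_cancel] at h
    nlinarith [mul_le_mul_of_nonneg_left hdist K.coe_nonneg]
  · refine .of_forall fun u x _ => ?_
    have h := (hf _).hasGradientAt.hasFDerivAt.comp x ((hasFDerivAt_id x).add_const (mApp S u))
    rw [ContinuousLinearMap.comp_id] at h
    exact (h.mul_const _).congr_fderiv (by rw [map_smul]; rfl)
  have hcomm := (InnerProductSpace.toDual ℝ (Vec d)).toContinuousLinearEquiv.integral_comp_comm
    (μ := volume) fun u => exp (-‖u‖ ^ 2) • gradient f (x₀ + mApp S u)
  simp only [LinearIsometryEquiv.coe_toContinuousLinearEquiv] at hcomm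
  rw [hcomm] at hderiv
  rw [hasGradientAt_iff_hasFDerivAt, map_smul]
  exact hderiv.const_mul _

theorem norm_gradient_gsmooth_sub_le (hf : Differentiable ℝ f)
    (hK : LipschitzWith K (gradient f)) (S : Matrix (Fin d) (Fin d) ℝ) (x : Vec d) :
    ‖gradient (gsmooth f S) x - gradient f x‖ ≤ K * opNorm S * √((d : ℝ) / 2) := by
  set c := π ^ ((d : ℝ) / 2)
  have hc : 0 < c := by positivity
  have hconst : gradient f x = c⁻¹ • ∫ u : Vec d, exp (-‖u‖ ^ 2) • gradient f x := by
    rw [integral_smul_const, integral_exp_neg_sq_norm, finrank_euclideanSpace_fin, smul_smul,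
      inv_mul_cancel₀ hc.ne', one_smul]
  have hdiff : ‖∫ u : Vec d, (exp (-‖u‖ ^ 2) • gradient f (x + mApp S u) -
      exp (-‖u‖ ^ 2) • gradient f x)‖ ≤ ∫ u : Vec d, K * opNorm S * (‖u‖ * exp (-‖u‖ ^ 2)) := by
    refine norm_integral_le_of_norm_le (integrable_norm_mul_exp_neg_sq_norm.const_mul _)
      (.of_forall fun u => ?_)
    rw [← smul_sub, norm_smul, Real.norm_of_nonneg (exp_nonneg _)]
    have h := hK.norm_sub_le (x + mApp S u) x
    rw [add_sub_cancel_left] at h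
    calc exp (-‖u‖ ^ 2) * ‖gradient f (x + mApp S u) - gradient f x‖
        ≤ exp (-‖u‖ ^ 2) * (K * (opNorm S * ‖u‖)) := by
          gcongr; exact h.trans (by gcongr; exact norm_mApp_le S u)
      _ = K * opNorm S * (‖u‖ * exp (-‖u‖ ^ 2)) := by ring
  rw [(hasGradientAt_gsmooth hf hK S x).gradient, hconst, ← smul_sub,
    ← integral_sub (integrable_exp_smul_gradient_comp hK S x) (integrable_exp_neg_sq_norm.smul_const _),
    norm_smul, Real.norm_of_nonneg (inv_nonneg.2 hc.le), inv_mul_le_iff₀ hc]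
  refine hdiff.trans ?_
  rw [integral_const_mul]
  have := integral_norm_mul_exp_neg_sq_norm_le (V := Vec d)
  rw [finrank_euclideanSpace_fin] at this
  calc K * opNorm S * ∫ u : Vec d, ‖u‖ * exp (-‖u‖ ^ 2)
      ≤ K * opNorm S * (√((d : ℝ) / 2) * c) := by have := opNorm_nonneg S; gcongr
    _ = c * (K * opNorm S * √((d : ℝ) / 2)) := by ring

end Smoothing

theorem stmt_15_general {d : ℕ} (f : Vec d → ℝ) (L : ℝ)
    (hdiff : Differentiable ℝ f)
    (hL : ∀ a b : Vec d, ‖gradient f a - gradient f b‖ ≤ L * ‖a - b‖)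
    (fstar : ℝ) (hlb : ∀ y : Vec d, fstar ≤ f y)
    (T : ℕ) (hT : 1 ≤ T)
    (S : ℕ → Matrix (Fin d) (Fin d) ℝ)
    (hS : ∀ t, 1 ≤ t → (S t).IsSymm ∧ IsUnit (S t).det)
    (lam : ℝ) (hlam : 0 < lam) (hlamL : lam ≤ 1 / L)
    (B : Matrix (Fin d) (Fin d) ℝ → Matrix (Fin d) (Fin d) ℝ → ℝ)
    (hB : ∀ A A' (x : Vec d), |gsmooth f A x - gsmooth f A' x| ≤ B A A')
    (x : ℕ → Vec d)
    (hrec : ∀ t < T, x (t + 1) = x t - lam • gradient (gsmooth f (S (t + 1))) (x t)) :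
    ((Finset.Icc 1 T).inf' (Finset.nonempty_Icc.mpr hT)
        fun t => ‖gradient f (x t)‖ ^ 2) ≤
      4 / ((T : ℝ) * lam) * (f (x 0) - fstar) +
      L ^ 2 / (T : ℝ) * (((6 : ℝ) + d) / 2) ^ 3 *
        ∑ t ∈ Finset.Icc 1 T, opNorm (S t) ^ 4 * opNorm (S t)⁻¹ ^ 2 +
      4 / ((T : ℝ) * lam) * ∑ t ∈ Finset.range (T + 1), B (S (t + 1)) (S t) := by
  have hLpos : 0 < L := by
    by_contra! h
    linarith [one_div_nonpos.2 h]
  set K : ℝ≥0 := ⟨L, hLpos.le⟩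
  have hK : LipschitzWith K (gradient f) :=
    LipschitzWith.of_dist_le_mul fun a b => by rw [dist_eq_norm, dist_eq_norm]; exact hL a b
  have hlamK : lam * K ≤ 1 := (le_div_iff₀ hLpos).1 (by simpa using hlamL)
  have hdescent := inf'_sq_norm_gradient_le_of_biased_gd hdiff hK hlb hlam hlamK hT hrec
    (G := fun t => L * opNorm (S (t + 1)) * √((d : ℝ) / 2))
    fun t _ => norm_gradient_gsmooth_sub_le hdiff hK (S (t + 1)) (x t)
  have hbias := sum_sq_mul_sqrt_le_sum_opNorm_pow_four_mul (fun t ht => (hS t ht).2) L T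
  have hBsum : 0 ≤ ∑ t ∈ Finset.range (T + 1), B (S (t + 1)) (S t) :=
    Finset.sum_nonneg fun t _ => (abs_nonneg _).trans (hB _ _ 0)
  have := mul_nonneg (by positivity : (0 : ℝ) ≤ 4 / (T * lam)) hBsum
  linarith

/-- convergence of AGS-GD for non-convex `L`-smooth functions. -/
theorem stmt_15 {d : ℕ} (f : Vec d → ℝ) (L : ℝ)
    (hdiff : Differentiable ℝ f)
    (hL : ∀ a b : Vec d, ‖gradient f a - gradient f b‖ ≤ L * ‖a - b‖)
    (fstar : ℝ) (hlb : ∀ y : Vec d, fstar ≤ f y) (hat : ∃ y : Vec d, f y = fstar)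
    (T : ℕ) (hT : 1 ≤ T)
    (S : ℕ → Matrix (Fin d) (Fin d) ℝ)
    (hS : ∀ t, 1 ≤ t → (S t).IsSymm ∧ IsUnit (S t).det)
    (lam : ℝ) (hlam : 0 < lam) (hlamL : lam ≤ 1 / L)
    (B : Matrix (Fin d) (Fin d) ℝ → Matrix (Fin d) (Fin d) ℝ → ℝ)
    (hB : ∀ A A' (x : Vec d), |gsmooth f A x - gsmooth f A' x| ≤ B A A')
    (x : ℕ → Vec d)
    (hrec : ∀ t < T, x (t + 1) = x t - lam • gradient (gsmooth f (S (t + 1))) (x t)) :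
    ((Finset.Icc 1 T).inf' (Finset.nonempty_Icc.mpr hT)
        fun t => ‖gradient f (x t)‖ ^ 2) ≤
      4 / ((T : ℝ) * lam) * (f (x 0) - fstar) +
      L ^ 2 / (T : ℝ) * (((6 : ℝ) + d) / 2) ^ 3 *
        ∑ t ∈ Finset.Icc 1 T, opNorm (S t) ^ 4 * opNorm (S t)⁻¹ ^ 2 +
      4 / ((T : ℝ) * lam) * ∑ t ∈ Finset.range (T + 1), B (S (t + 1)) (S t) :=
  stmt_15_general f L hdiff hL fstar hlb T hT S hS lam hlam hlamL B hB x hrec
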